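/- For integers a ≥ b ≥ 1, the two-row partition (a,b) is a triangular partition if and only if 2b ≤ a + 1. -/

import Mathlib

/-- A partition: a weakly decreasing finite list of positive integers. -/
def IsPartition (l : List ℕ) : Prop :=
  l.Pairwise (· ≥ ·) ∧ ∀ x ∈ l, 0 < x

/-- The cells of the diagram of `l`: the pairs `(i, j)` of positive integers with
`1 ≤ i ≤ ℓ(l)` and `1 ≤ j ≤ l_i`. -/
def cells (l : List ℕ) : Set (ℕ × ℕ) :=
  {p | 1 ≤ p.1 ∧ p.1 ≤ l.length ∧ 1 ≤ p.2 ∧ p.2 ≤ l.getD (p.1 - 1) 0}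

/-- A partition is *triangular* if there are positive reals `r`, `s` such that its cells
are exactly the pairs of positive integers `(i, j)` with `i/r + j/s ≤ 1`. -/
def IsTriangular (l : List ℕ) : Prop :=
  ∃ r s : ℝ, 0 < r ∧ 0 < s ∧
    ∀ i j : ℕ, 1 ≤ i → 1 ≤ j →
      ((i, j) ∈ cells l ↔ (i : ℝ) / r + (j : ℝ) / s ≤ 1)

/-!
The non-cells `(3, 1)` and `(1, a + 1)` lie strictly above a line `x/r + y/s = 1` cutting out
`(a, b)`, hence so does their midpoint `(2, (a + 2)/2)`, while the cell `(2, b)` lies on or below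
it; this forces `2b < a + 2`. Conversely, when `2b ≤ a + 1` the line through `(1, a + 1/2)` and
`(2, b)` works.
-/

lemma mem_cells_pair {a b i j : ℕ} :
    (i, j) ∈ cells [a, b] ↔ 1 ≤ j ∧ (i = 1 ∧ j ≤ a ∨ i = 2 ∧ j ≤ b) := by
  rcases i with _ | _ | _ | i <;> simp [cells]

lemma isTriangular_of_nat_weights {l : List ℕ} (p q n : ℕ) (hp : 0 < p) (hq : 0 < q)
    (hn : 0 < n) (h : ∀ i j : ℕ, 1 ≤ i → 1 ≤ j → ((i, j) ∈ cells l ↔ i * p + j * q ≤ n)) :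
    IsTriangular l := by
  refine ⟨n / p, n / q, by positivity, by positivity, fun i j hi hj => ?_⟩
  rw [h i j hi hj, div_div_eq_mul_div, div_div_eq_mul_div, ← add_div,
    div_le_one (by positivity)]
  norm_cast

lemma isTriangular_pair {a b : ℕ} (h : 2 * b ≤ a + 1) : IsTriangular [a, b] := by
  -- `(2(a - b) + 1) x + 2 y = 4a + 2 - 2b` meets the third row at `y = 2b - a - 1/2 < 1`
  refine isTriangular_of_nat_weights (2 * (a - b) + 1) 2 (4 * a + 2 - 2 * b) (by omega)
    two_pos (by omega) fun i j hi hj => ?_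
  rw [mem_cells_pair]
  rcases (show i = 1 ∨ i = 2 ∨ 3 ≤ i by omega) with rfl | rfl | hi
  · omega
  · omega
  · have := Nat.mul_le_mul_right (2 * (a - b) + 1) hi
    omega

lemma two_mul_le_succ_of_isTriangular_pair {a b : ℕ} (hb : 1 ≤ b) (h : IsTriangular [a, b]) :
    2 * b ≤ a + 1 := by
  obtain ⟨r, s, -, hs, h⟩ := h
  have below : 2 / r + b / s ≤ 1 := by
    simpa using (h 2 b (by norm_num) hb).1 (by simp [mem_cells_pair, hb])
  have above₁ : 1 < 3 / r + 1 / s := not_le.1 fun h' => by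
    simpa [mem_cells_pair] using (h 3 1 (by norm_num) le_rfl).2 (by simpa using h')
  have above₂ : 1 < 1 / r + (a + 1) / s := not_le.1 fun h' => by
    simpa [mem_cells_pair] using (h 1 (a + 1) le_rfl (by omega)).2 (by simpa using h')
  simp only [div_eq_mul_inv] at below above₁ above₂
  have : 2 * (b : ℝ) * s⁻¹ < (a + 2) * s⁻¹ := by linarith
  have : (2 * b : ℝ) < a + 2 := lt_of_mul_lt_mul_right this (inv_pos.2 hs).le
  have : 2 * b < a + 2 := by exact_mod_cast this
  omega

theorem two_row_triangular_iff_general (a b : ℕ) (hb : 1 ≤ b) :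
    IsTriangular [a, b] ↔ 2 * b ≤ a + 1 :=
  ⟨two_mul_le_succ_of_isTriangular_pair hb, isTriangular_pair⟩

/-- For integers `a ≥ b ≥ 1`, the two-row partition `(a, b)` is triangular
if and only if `2b ≤ a + 1`. -/
theorem two_row_triangular_iff (a b : ℕ) (hb : 1 ≤ b) (hba : b ≤ a) :
    IsTriangular [a, b] ↔ 2 * b ≤ a + 1 :=
  two_row_triangular_iff_general a b hb
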